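/- Fix s ∈ {1,…,n} and suppose (i*, α*) ∈ argmin_{i∈{0,…,s−1}, α∈ℝ} P_s(i,α). Define y* ∈ ℝˢ by y*_j := α* for j ∈ {i*+1,…,s}, and, if i* ≥ 1, let y*_{1:i*} ∈ ℝ^{i*} be any global minimizer of h_{i*} over ℝ^{i*}. Then y* is a global minimizer of h_s over ℝˢ, i.e., h_s(y*) = H(s). -/

import Mathlib

open scoped Classical

/-- `h_s(y; z_{1:s})` (0-indexed: coordinates `0,…,s−1` of `y`,`z`,`l`,`u` play the role of
the paper's coordinates `1,…,s`): the objective of the fused ℓ₀ proximal subproblem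
`(1/2)Σ_{j<s}(y_j−z_j)² + λ₁ Σ_{j<s−1}|y_j−y_{j+1}|₀ + Σ_{j<s} ω_j(y_j)`,
with value `⊤` outside the box constraints. -/
noncomputable def hfun (lam1 lam2 : ℝ) (l u z : ℕ → ℝ) (s : ℕ) (y : ℕ → ℝ) : EReal :=
  if ∀ j ∈ Finset.range s, l j ≤ y j ∧ y j ≤ u j then
    ((((1 : ℝ) / 2) * ∑ j ∈ Finset.range s, (y j - z j) ^ 2
      + lam1 * ∑ j ∈ Finset.range (s - 1), (if y j = y (j + 1) then (0 : ℝ) else 1)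
      + lam2 * ∑ j ∈ Finset.range s, (if y j = 0 then (0 : ℝ) else 1) : ℝ) : EReal)
  else ⊤

/-- `H(0) = −λ₁` and, for `s ≥ 1`, `H(s) = min_{y ∈ ℝˢ} h_s(y; z_{1:s})`
(the minimum is attained; it equals the infimum). -/
noncomputable def Hfun (lam1 lam2 : ℝ) (l u z : ℕ → ℝ) : ℕ → EReal
  | 0 => ((-lam1 : ℝ) : EReal)
  | s + 1 => ⨅ y : ℕ → ℝ, hfun lam1 lam2 l u z (s + 1) y

/-- `P_s(i,α) = H(i) + (1/2)Σ_{j=i+1}^{s}(α−z_j)² + Σ_{j=i+1}^{s} ω_j(α) + λ₁`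
(0-indexed: the sums run over `j ∈ [i, s)`). -/
noncomputable def Pfun (lam1 lam2 : ℝ) (l u z : ℕ → ℝ) (s i : ℕ) (α : ℝ) : EReal :=
  Hfun lam1 lam2 l u z i +
    (if ∀ j ∈ Finset.Ico i s, l j ≤ α ∧ α ≤ u j then
      ((((1 : ℝ) / 2) * ∑ j ∈ Finset.Ico i s, (α - z j) ^ 2
        + lam2 * ((s - i : ℕ) : ℝ) * (if α = 0 then (0 : ℝ) else 1) + lam1 : ℝ) : EReal)
    else ⊤)

/-- `P_s^*(α) = min_{i ∈ {0,…,s−1}} P_s(i,α)`. -/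
noncomputable def Pstar (lam1 lam2 : ℝ) (l u z : ℕ → ℝ) (s : ℕ) (α : ℝ) : EReal :=
  ⨅ i ∈ Finset.range s, Pfun lam1 lam2 l u z s i α

/-!
A vector `y ∈ ℝˢ` ends in a maximal constant block `y_i = ⋯ = y_{s-1} = α`. Splitting `h_s(y)`
at `i` gives `h_i(y) + λ₁ + (cost of the block)` when `i > 0`, the `λ₁` paying for the jump in
front of the block, and just the block cost when `i = 0`; the convention `H(0) = −λ₁` makes both
cases read `h_s(y) ≥ P_s(i, α) ≥ P_s(i*, α*)`. Conversely, the same splitting of `y*` at `i*`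
costs at most `λ₁` for the jump, so `h_s(y*) ≤ H(i*) + λ₁ + (cost of the block) = P_s(i*, α*)`.
-/

open Finset

lemma exists_start_of_const_suffix {β : Type*} (w : ℕ → β) {s : ℕ} (hs : 0 < s) :
    ∃ i < s, (∀ j, i ≤ j → j < s → w j = w (s - 1)) ∧ (i = 0 ∨ w (i - 1) ≠ w (s - 1)) := by
  have hlast : ∀ j, s - 1 ≤ j → j < s → w j = w (s - 1) := fun j hj hjs => by
    rw [show j = s - 1 by omega]
  have hex : ∃ i, ∀ j, i ≤ j → j < s → w j = w (s - 1) := ⟨s - 1, hlast⟩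
  refine ⟨Nat.find hex, by have := Nat.find_min' hex hlast; omega, Nat.find_spec hex, ?_⟩
  rw [or_iff_not_imp_left]
  intro hne heq
  refine Nat.find_min hex (by omega : Nat.find hex - 1 < Nat.find hex) fun j hj hjs => ?_
  rcases hj.eq_or_lt with rfl | hlt
  · exact heq
  · exact Nat.find_spec hex j (by omega) hjs

noncomputable def hfunReal (lam1 lam2 : ℝ) (z : ℕ → ℝ) (s : ℕ) (y : ℕ → ℝ) : ℝ :=
  ((1 : ℝ) / 2) * ∑ j ∈ range s, (y j - z j) ^ 2
    + lam1 * ∑ j ∈ range (s - 1), (if y j = y (j + 1) then (0 : ℝ) else 1)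
    + lam2 * ∑ j ∈ range s, (if y j = 0 then (0 : ℝ) else 1)

noncomputable def tailReal (lam2 : ℝ) (z : ℕ → ℝ) (s i : ℕ) (α : ℝ) : ℝ :=
  ((1 : ℝ) / 2) * ∑ j ∈ Ico i s, (α - z j) ^ 2
    + lam2 * ((s - i : ℕ) : ℝ) * (if α = 0 then (0 : ℝ) else 1)

noncomputable def tailFun (lam2 : ℝ) (l u z : ℕ → ℝ) (s i : ℕ) (α : ℝ) : EReal :=
  if ∀ j ∈ Ico i s, l j ≤ α ∧ α ≤ u j then ((tailReal lam2 z s i α : ℝ) : EReal) else ⊤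

section

variable {lam1 lam2 : ℝ} {l u z : ℕ → ℝ}

lemma hfun_eq_ite (s : ℕ) (y : ℕ → ℝ) :
    hfun lam1 lam2 l u z s y =
      if ∀ j ∈ range s, l j ≤ y j ∧ y j ≤ u j then ((hfunReal lam1 lam2 z s y : ℝ) : EReal)
      else ⊤ := rfl

lemma hfun_zero (y : ℕ → ℝ) : hfun lam1 lam2 l u z 0 y = 0 := by
  simp [hfun_eq_ite, hfunReal]

lemma hfun_ne_bot (s : ℕ) (y : ℕ → ℝ) : hfun lam1 lam2 l u z s y ≠ ⊥ := by
  rw [hfun_eq_ite]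
  split <;> simp

lemma hfunReal_nonneg (h1 : 0 ≤ lam1) (h2 : 0 ≤ lam2) (s : ℕ) (y : ℕ → ℝ) :
    0 ≤ hfunReal lam1 lam2 z s y := by
  unfold hfunReal
  have hsq : 0 ≤ ∑ j ∈ range s, (y j - z j) ^ 2 := sum_nonneg fun j _ => sq_nonneg _
  have hjump : 0 ≤ ∑ j ∈ range (s - 1), (if y j = y (j + 1) then (0 : ℝ) else 1) :=
    sum_nonneg fun j _ => by split <;> norm_num
  have hzero : 0 ≤ ∑ j ∈ range s, (if y j = 0 then (0 : ℝ) else 1) :=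
    sum_nonneg fun j _ => by split <;> norm_num
  linarith [mul_nonneg h1 hjump, mul_nonneg h2 hzero]

lemma hfun_nonneg (h1 : 0 ≤ lam1) (h2 : 0 ≤ lam2) (s : ℕ) (y : ℕ → ℝ) :
    0 ≤ hfun lam1 lam2 l u z s y := by
  rw [hfun_eq_ite]
  split
  · exact_mod_cast hfunReal_nonneg h1 h2 s y
  · exact le_top

lemma Hfun_ne_bot (h1 : 0 ≤ lam1) (h2 : 0 ≤ lam2) (i : ℕ) : Hfun lam1 lam2 l u z i ≠ ⊥ := by
  cases i with
  | zero => exact EReal.coe_ne_bot _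
  | succ k =>
    exact ne_bot_of_le_ne_bot EReal.zero_ne_bot (le_iInf fun y => hfun_nonneg h1 h2 _ y)

variable {s i : ℕ} {w : ℕ → ℝ} {α : ℝ}

lemma tailFun_ne_bot : tailFun lam2 l u z s i α ≠ ⊥ := by
  unfold tailFun
  split <;> simp

lemma Pfun_eq_add_tailFun (h1 : 0 ≤ lam1) (h2 : 0 ≤ lam2) :
    Pfun lam1 lam2 l u z s i α = Hfun lam1 lam2 l u z i + lam1 + tailFun lam2 l u z s i α := by
  have hH := Hfun_ne_bot (l := l) (u := u) (z := z) h1 h2 i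
  change Hfun lam1 lam2 l u z i + (if _ then ((tailReal lam2 z s i α + lam1 : ℝ) : EReal) else ⊤)
    = _
  unfold tailFun
  split
  · rw [add_assoc, EReal.coe_add, add_comm (tailReal lam2 z s i α : EReal)]
  · rw [EReal.add_top_of_ne_bot hH, EReal.add_top_of_ne_bot (by simpa using hH)]

lemma sum_jump_Ico_eq_zero (hw : ∀ j, i ≤ j → j < s → w j = α) :
    ∑ j ∈ Ico i (s - 1), (if w j = w (j + 1) then (0 : ℝ) else 1) = 0 :=
  sum_eq_zero fun j hj => by
    rw [Finset.mem_Ico] at hj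
    rw [hw j hj.1 (by omega), hw (j + 1) (by omega) (by omega), if_pos rfl]

lemma sum_jump_range_eq (his : i < s) (hw : ∀ j, i ≤ j → j < s → w j = α) :
    ∑ j ∈ range (s - 1), (if w j = w (j + 1) then (0 : ℝ) else 1)
      = ∑ j ∈ range (i - 1), (if w j = w (j + 1) then (0 : ℝ) else 1)
        + if i = 0 ∨ w (i - 1) = α then 0 else 1 := by
  cases i with
  | zero => rw [range_eq_Ico, sum_jump_Ico_eq_zero hw]; simp
  | succ k =>
    rw [← sum_range_add_sum_Ico _ (by omega : k ≤ s - 1),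
      sum_eq_sum_Ico_succ_bot (by omega : k < s - 1), sum_jump_Ico_eq_zero hw,
      hw (k + 1) le_rfl his]
    simp

lemma sum_range_eq_add_sum_Ico_of_const (f : ℕ → ℝ → ℝ) (his : i ≤ s)
    (hw : ∀ j, i ≤ j → j < s → w j = α) :
    ∑ j ∈ range s, f j (w j) = ∑ j ∈ range i, f j (w j) + ∑ j ∈ Ico i s, f j α := by
  rw [← sum_range_add_sum_Ico _ his]
  congr 1
  exact sum_congr rfl fun j hj => by rw [hw j (Finset.mem_Ico.1 hj).1 (Finset.mem_Ico.1 hj).2]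

lemma hfunReal_eq_of_const_on_Ico (his : i < s) (hw : ∀ j, i ≤ j → j < s → w j = α) :
    hfunReal lam1 lam2 z s w = hfunReal lam1 lam2 z i w
      + (if i = 0 ∨ w (i - 1) = α then 0 else lam1) + tailReal lam2 z s i α := by
  have hsq := sum_range_eq_add_sum_Ico_of_const (fun j a => (a - z j) ^ 2) his.le hw
  have hzero := sum_range_eq_add_sum_Ico_of_const (fun _ a => if a = 0 then (0 : ℝ) else 1)
    his.le hw
  simp only [sum_const, Nat.card_Ico, nsmul_eq_mul] at hsq hzero
  unfold hfunReal tailReal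
  rw [hsq, hzero, sum_jump_range_eq his hw]
  split_ifs <;> ring

lemma box_range_iff_of_const_on_Ico (his : i < s) (hw : ∀ j, i ≤ j → j < s → w j = α) :
    (∀ j ∈ range s, l j ≤ w j ∧ w j ≤ u j) ↔
      (∀ j ∈ range i, l j ≤ w j ∧ w j ≤ u j) ∧ ∀ j ∈ Ico i s, l j ≤ α ∧ α ≤ u j := by
  simp only [Finset.mem_range, Finset.mem_Ico]
  constructor
  · intro h
    exact ⟨fun j hj => h j (by omega), fun j hj => hw j hj.1 hj.2 ▸ h j hj.2⟩
  · intro ⟨hhead, htail⟩ j hj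
    rcases lt_or_ge j i with hji | hji
    · exact hhead j hji
    · exact (hw j hji hj).symm ▸ htail j ⟨hji, hj⟩

lemma hfun_eq_of_const_on_Ico (his : i < s) (hw : ∀ j, i ≤ j → j < s → w j = α) :
    hfun lam1 lam2 l u z s w = hfun lam1 lam2 l u z i w
      + ((if i = 0 ∨ w (i - 1) = α then 0 else lam1 : ℝ) : EReal)
      + tailFun lam2 l u z s i α := by
  have hbox := box_range_iff_of_const_on_Ico (l := l) (u := u) his hw
  by_cases hhead : ∀ j ∈ range i, l j ≤ w j ∧ w j ≤ u j
  · by_cases htail : ∀ j ∈ Ico i s, l j ≤ α ∧ α ≤ u j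
    · rw [hfun_eq_ite, hfun_eq_ite, if_pos (hbox.2 ⟨hhead, htail⟩), if_pos hhead, tailFun,
        if_pos htail, hfunReal_eq_of_const_on_Ico his hw]
      norm_cast
    · rw [hfun_eq_ite s, if_neg (fun h => htail (hbox.1 h).2), tailFun, if_neg htail,
        EReal.add_top_of_ne_bot (EReal.add_ne_bot_iff.2 ⟨hfun_ne_bot i w, EReal.coe_ne_bot _⟩)]
  · rw [hfun_eq_ite s, if_neg (fun h => hhead (hbox.1 h).1), hfun_eq_ite i, if_neg hhead,
      EReal.top_add_coe, EReal.top_add_of_ne_bot tailFun_ne_bot]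

lemma Hfun_add_le (i : ℕ) (w : ℕ → ℝ) :
    Hfun lam1 lam2 l u z i + lam1
      ≤ hfun lam1 lam2 l u z i w + ((if i = 0 then 0 else lam1 : ℝ) : EReal) := by
  cases i with
  | zero =>
    rw [hfun_zero, if_pos rfl, Hfun, ← EReal.coe_add]
    simp
  | succ k =>
    rw [if_neg k.succ_ne_zero]
    exact add_le_add_left (iInf_le _ w) _

lemma le_Hfun_add (i : ℕ) (y : ℕ → ℝ)
    (hmin : i ≠ 0 → ∀ w, hfun lam1 lam2 l u z i y ≤ hfun lam1 lam2 l u z i w) :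
    hfun lam1 lam2 l u z i y + ((if i = 0 then 0 else lam1 : ℝ) : EReal)
      ≤ Hfun lam1 lam2 l u z i + lam1 := by
  cases i with
  | zero =>
    rw [hfun_zero, if_pos rfl, Hfun, ← EReal.coe_add]
    simp
  | succ k =>
    rw [if_neg k.succ_ne_zero]
    exact add_le_add_left (le_iInf (hmin k.succ_ne_zero)) _

lemma exists_Pfun_le_hfun (h1 : 0 ≤ lam1) (h2 : 0 ≤ lam2) (hs : 0 < s) (w : ℕ → ℝ) :
    ∃ i < s, ∃ α, Pfun lam1 lam2 l u z s i α ≤ hfun lam1 lam2 l u z s w := by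
  obtain ⟨i, his, hw, hstart⟩ := exists_start_of_const_suffix w hs
  have hjump : (if i = 0 ∨ w (i - 1) = w (s - 1) then 0 else lam1)
      = if i = 0 then 0 else lam1 := by
    by_cases hi : i = 0 <;> simp_all
  refine ⟨i, his, w (s - 1), ?_⟩
  rw [Pfun_eq_add_tailFun h1 h2, hfun_eq_of_const_on_Ico his hw, hjump]
  exact add_le_add_left (Hfun_add_le i w) _

lemma hfun_le_Pfun (h1 : 0 ≤ lam1) (h2 : 0 ≤ lam2) (his : i < s)
    (hw : ∀ j, i ≤ j → j < s → w j = α)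
    (hmin : i ≠ 0 → ∀ v, hfun lam1 lam2 l u z i w ≤ hfun lam1 lam2 l u z i v) :
    hfun lam1 lam2 l u z s w ≤ Pfun lam1 lam2 l u z s i α := by
  have hjump : (if i = 0 ∨ w (i - 1) = α then 0 else lam1) ≤ if i = 0 then 0 else lam1 := by
    split_ifs <;> simp_all
  rw [Pfun_eq_add_tailFun h1 h2, hfun_eq_of_const_on_Ico his hw]
  gcongr ?_ + _
  exact (add_le_add le_rfl (EReal.coe_le_coe_iff.2 hjump)).trans (le_Hfun_add i w hmin)

end

theorem stmt4 (lam1 lam2 : ℝ) (hlam1 : 0 < lam1) (hlam2 : 0 < lam2)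
    (l u z : ℕ → ℝ)
    (s : ℕ) (hs1 : 1 ≤ s)
    (istar : ℕ) (histar : istar < s) (αstar : ℝ)
    (hargmin : ∀ i < s, ∀ α : ℝ,
      Pfun lam1 lam2 l u z s istar αstar ≤ Pfun lam1 lam2 l u z s i α)
    (ystar : ℕ → ℝ)
    (htail : ∀ j, istar ≤ j → j < s → ystar j = αstar)
    (hhead : istar ≠ 0 → ∀ w : ℕ → ℝ,
      hfun lam1 lam2 l u z istar ystar ≤ hfun lam1 lam2 l u z istar w) :
    hfun lam1 lam2 l u z s ystar = Hfun lam1 lam2 l u z s := by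
  obtain ⟨t, rfl⟩ : ∃ t, s = t + 1 := ⟨s - 1, by omega⟩
  refine le_antisymm ?_ (iInf_le _ ystar)
  refine (hfun_le_Pfun hlam1.le hlam2.le histar htail hhead).trans (le_iInf fun w => ?_)
  obtain ⟨i, hi, α, hle⟩ := exists_Pfun_le_hfun hlam1.le hlam2.le t.succ_pos w
  exact (hargmin i hi α).trans hle
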